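/- Let d ≥ 1 be an integer, L ≥ 0, and let f : ℝ^d → ℝ be L-smooth. Let θ, u, g ∈ ℝ^d with u ≠ 0, let γ > 0, and set θ⁺ = θ + γ·u/‖u‖. Then −f(θ⁺) ≤ −f(θ) − (γ/3)·‖∇f(θ)‖ + (8γ/3)·‖u − g‖ + (L·γ²)/2 + (4γ/3)·‖g − ∇f(θ)‖. -/

import Mathlib

/-!
The descent lemma for an `L`-smooth `f` bounds `-f(θ⁺)` by `-f θ - γ ⟪∇f θ, u⟫ / ‖u‖ + L γ² / 2`,
so it remains to bound the normalized inner product `⟪v, u⟫ / ‖u‖` from below (with `v = ∇f θ`).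
Cauchy–Schwarz gives `-‖v‖`, and writing `v = u - (u - v)` gives `‖v‖ - 2 ‖u - v‖`; the average
of these with weights `1/3, 2/3` is `‖v‖ / 3 - (4/3) ‖u - v‖`, and the triangle inequality through
`g` finishes the proof.
-/

open InnerProductSpace Set

section Descent

variable {E : Type*} [NormedAddCommGroup E] [InnerProductSpace ℝ E] [CompleteSpace E]
  {f : E → ℝ}

theorem hasDerivAt_comp_add_smul (hf : Differentiable ℝ f) (x δ : E) (t : ℝ) :
    HasDerivAt (fun s : ℝ => f (x + s • δ)) ⟪gradient f (x + t • δ), δ⟫_ℝ t := by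
  have hline : HasDerivAt (fun s : ℝ => x + s • δ) δ t := by
    simpa using ((hasDerivAt_id t).smul_const δ).const_add x
  exact (hf _).hasGradientAt.hasFDerivAt.comp_hasDerivAt t hline

theorem neg_mul_le_inner_gradient_sub {L : ℝ}
    (hlip : ∀ x y, ‖gradient f x - gradient f y‖ ≤ L * ‖x - y‖)
    (x δ : E) {t : ℝ} (ht : 0 ≤ t) :
    -(L * t * ‖δ‖ ^ 2) ≤ ⟪gradient f (x + t • δ) - gradient f x, δ⟫_ℝ := by
  have hgrad : ‖gradient f (x + t • δ) - gradient f x‖ ≤ L * (t * ‖δ‖) := by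
    simpa [norm_smul, abs_of_nonneg ht] using hlip (x + t • δ) x
  have hcs := neg_le_of_abs_le (abs_real_inner_le_norm (gradient f (x + t • δ) - gradient f x) δ)
  nlinarith [norm_nonneg δ]

theorem add_inner_gradient_sub_le_apply_add {L : ℝ} (hf : Differentiable ℝ f)
    (hlip : ∀ x y, ‖gradient f x - gradient f y‖ ≤ L * ‖x - y‖) (x δ : E) :
    f x + ⟪gradient f x, δ⟫_ℝ - L / 2 * ‖δ‖ ^ 2 ≤ f (x + δ) := by
  set c := ⟪gradient f x, δ⟫_ℝ
  set φ : ℝ → ℝ := fun t => f (x + t • δ) - t * c + L * ‖δ‖ ^ 2 / 2 * t ^ 2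
  have hφ : ∀ t, HasDerivAt φ (⟪gradient f (x + t • δ), δ⟫_ℝ - c + L * ‖δ‖ ^ 2 * t) t := by
    intro t
    refine (((hasDerivAt_comp_add_smul hf x δ t).sub ((hasDerivAt_id t).mul_const c)).add
      ((hasDerivAt_pow 2 t).const_mul (L * ‖δ‖ ^ 2 / 2))).congr_deriv ?_
    simp only [Nat.cast_ofNat]
    ring
  have hmono : MonotoneOn φ (Ici 0) := by
    refine monotoneOn_of_hasDerivWithinAt_nonneg (convex_Ici 0)
      (fun t _ => (hφ t).continuousAt.continuousWithinAt)
      (fun t _ => (hφ t).hasDerivWithinAt) fun t ht => ?_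
    rw [interior_Ici] at ht
    have hlower := neg_mul_le_inner_gradient_sub hlip x δ ht.le
    rw [inner_sub_left] at hlower
    linarith
  have h01 := hmono (mem_Ici.2 le_rfl) (mem_Ici.2 zero_le_one) zero_le_one
  simp only [φ, zero_smul, add_zero, one_smul] at h01
  linarith

end Descent

theorem norm_div_three_sub_le_inner_div_norm {E : Type*} [NormedAddCommGroup E]
    [InnerProductSpace ℝ E] (v u : E) (hu : u ≠ 0) :
    ‖v‖ / 3 - 4 / 3 * ‖u - v‖ ≤ ⟪v, u⟫_ℝ / ‖u‖ := by
  have hu' : 0 < ‖u‖ := norm_pos_iff.mpr hu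
  have hcs : -‖v‖ ≤ ⟪v, u⟫_ℝ / ‖u‖ := by
    rw [le_div_iff₀ hu']
    linarith [neg_le_of_abs_le (abs_real_inner_le_norm v u)]
  have hsplit : ‖v‖ - 2 * ‖u - v‖ ≤ ⟪v, u⟫_ℝ / ‖u‖ := by
    have hinner : ⟪v, u⟫_ℝ = ‖u‖ ^ 2 - ⟪u - v, u⟫_ℝ := by
      rw [inner_sub_left, real_inner_self_eq_norm_sq]
      ring
    have hv : ‖v‖ ≤ ‖u‖ + ‖u - v‖ := by
      simpa using norm_sub_le u (u - v)
    rw [le_div_iff₀ hu', hinner]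
    nlinarith [real_inner_le_norm (u - v) u]
  linarith

theorem stmt_0
    (d : ℕ) (L : ℝ)
    (f : EuclideanSpace ℝ (Fin d) → ℝ)
    (hdiff : Differentiable ℝ f)
    (hlip : ∀ x y, ‖gradient f x - gradient f y‖ ≤ L * ‖x - y‖)
    (θ u g : EuclideanSpace ℝ (Fin d)) (hu : u ≠ 0)
    (γ : ℝ) (hγ : 0 < γ) :
    -f (θ + (γ / ‖u‖) • u) ≤
      -f θ - (γ / 3) * ‖gradient f θ‖ + (8 * γ / 3) * ‖u - g‖
        + L * γ ^ 2 / 2 + (4 * γ / 3) * ‖g - gradient f θ‖ := by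
  set v := gradient f θ
  have hu' : 0 < ‖u‖ := norm_pos_iff.mpr hu
  have hstep : ‖(γ / ‖u‖) • u‖ = γ := by
    rw [norm_smul, Real.norm_of_nonneg (by positivity), div_mul_cancel₀ _ hu'.ne']
  have hinner : ⟪v, (γ / ‖u‖) • u⟫_ℝ = γ * (⟪v, u⟫_ℝ / ‖u‖) := by
    rw [real_inner_smul_right]
    ring
  have hdescent := add_inner_gradient_sub_le_apply_add hdiff hlip θ ((γ / ‖u‖) • u)
  rw [hstep, hinner] at hdescent
  have hdir := mul_le_mul_of_nonneg_left (norm_div_three_sub_le_inner_div_norm v u hu) hγ.le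
  have htri := mul_le_mul_of_nonneg_left (norm_sub_le_norm_sub_add_norm_sub u g v) hγ.le
  linarith [mul_nonneg hγ.le (norm_nonneg (u - g))]
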